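/- arXiv:2403.04863 — 2 statements merged into one kernel-verified Lean document; each statement's English description precedes it below -/
import Mathlib

section
/- Let C ⊆ ℝ^n be a nonempty compact convex set of diameter diam(C), and let Ψ : ℝ^n → ℝ be convex and differentiable with L-Lipschitz gradient. Let f^0 ∈ C and define the Frank–Wolfe iterates f^{k+1} = (1 − γ_k) f^k + γ_k s^k with s^k ∈ argmin_{s ∈ C} ⟨∇Ψ(f^k), s⟩ and step sizes γ_k = 2/(k + 2). Then for every k ≥ 1, Ψ(f^k) − min_{f ∈ C} Ψ(f) ≤ 2 L diam(C)² / (k + 1). -/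
/-!
Along the segment from `f k` towards the linear minimiser `s k`, the `L`-Lipschitz gradient gives
the quadratic upper bound `Ψ (x + γ v) ≤ Ψ x + γ ⟪∇Ψ x, v⟫ + L γ² ‖v‖² / 2`, while convexity and
the choice of `s k` bound the linear term by `γ (Ψ z - Ψ x)` for every `z ∈ C`. Hence the gap
`e k = Ψ (f k) - Ψ z` obeys `e (k+1) ≤ (1 - γ k) e k + γ k² L diam(C)² / 2`, and for
`γ k = 2 / (k + 2)` this recurrence forces `e k ≤ 2 L diam(C)² / (k + 1)` by induction from `k = 1`.
-/

open scoped RealInnerProductSpace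
open Set

theorem Convex.forall_mem_of_succ_eq_combination {E : Type*} [AddCommGroup E] [Module ℝ E]
    {C : Set E} (hC : Convex ℝ C) {f s : ℕ → E} {γ : ℕ → ℝ} (hγ : ∀ k, γ k ∈ Icc 0 1)
    (hf0 : f 0 ∈ C) (hs : ∀ k, s k ∈ C)
    (hf : ∀ k, f (k + 1) = (1 - γ k) • f k + γ k • s k) (k : ℕ) : f k ∈ C := by
  induction k with
  | zero => exact hf0
  | succ k ih =>
    rw [hf k]
    exact hC ih (hs k) (sub_nonneg.2 (hγ k).2) (hγ k).1 (sub_add_cancel 1 (γ k))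

section

variable {E : Type*} [NormedAddCommGroup E] [InnerProductSpace ℝ E] [CompleteSpace E]
  {Ψ : E → ℝ}

theorem HasGradientAt.hasDerivAt_comp_add_smul {g x v : E} {t : ℝ}
    (h : HasGradientAt Ψ g (x + t • v)) :
    HasDerivAt (fun t : ℝ => Ψ (x + t • v)) ⟪g, v⟫ t := by
  have hline : HasDerivAt (fun t : ℝ => x + t • v) v t := by
    simpa using ((hasDerivAt_id t).smul_const v).const_add x
  simpa [Function.comp_def] using h.hasFDerivAt.comp_hasDerivAt t hline

theorem ConvexOn.inner_gradient_sub_le {s : Set E} (hΨ : ConvexOn ℝ s Ψ) {x y : E}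
    (hx : x ∈ s) (hy : y ∈ s) (hd : DifferentiableAt ℝ Ψ x) :
    ⟪gradient Ψ x, y - x⟫ ≤ Ψ y - Ψ x := by
  have hline : ConvexOn ℝ (AffineMap.lineMap x y ⁻¹' s) (fun t : ℝ => Ψ (x + t • (y - x))) := by
    have hfun : (fun t : ℝ => Ψ (x + t • (y - x))) = Ψ ∘ AffineMap.lineMap x y := by
      funext t
      simp [AffineMap.lineMap_apply, add_comm]
    exact hfun ▸ hΨ.comp_affineMap _
  have hderiv : HasDerivAt (fun t : ℝ => Ψ (x + t • (y - x))) ⟪gradient Ψ x, y - x⟫ 0 :=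
    HasGradientAt.hasDerivAt_comp_add_smul (by simpa using hd.hasGradientAt)
  simpa [slope_def_field] using
    hline.le_slope_of_hasDerivAt (by simpa using hx) (by simpa using hy) zero_lt_one hderiv

theorem inner_gradient_add_smul_sub_le {L : NNReal} (hLip : LipschitzWith L (gradient Ψ))
    (x v : E) {t : ℝ} (ht : 0 ≤ t) :
    ⟪gradient Ψ (x + t • v), v⟫ - ⟪gradient Ψ x, v⟫ ≤ L * t * ‖v‖ ^ 2 :=
  calc ⟪gradient Ψ (x + t • v), v⟫ - ⟪gradient Ψ x, v⟫
      = ⟪gradient Ψ (x + t • v) - gradient Ψ x, v⟫ := (inner_sub_left _ _ _).symm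
    _ ≤ ‖gradient Ψ (x + t • v) - gradient Ψ x‖ * ‖v‖ := real_inner_le_norm _ _
    _ ≤ L * ‖t • v‖ * ‖v‖ := by
      gcongr
      simpa [dist_eq_norm] using hLip.dist_le_mul (x + t • v) x
    _ = L * t * ‖v‖ ^ 2 := by rw [norm_smul, Real.norm_of_nonneg ht]; ring

theorem apply_add_le_of_lipschitzWith_gradient (hΨ : Differentiable ℝ Ψ) {L : NNReal}
    (hLip : LipschitzWith L (gradient Ψ)) (x v : E) :
    Ψ (x + v) ≤ Ψ x + ⟪gradient Ψ x, v⟫ + L / 2 * ‖v‖ ^ 2 := by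
  have hf (t : ℝ) :
      HasDerivAt (fun t : ℝ => Ψ (x + t • v)) ⟪gradient Ψ (x + t • v), v⟫ t :=
    (hΨ _).hasGradientAt.hasDerivAt_comp_add_smul
  have hB (t : ℝ) :
      HasDerivAt (fun t : ℝ => Ψ x + t * ⟪gradient Ψ x, v⟫ + L / 2 * t ^ 2 * ‖v‖ ^ 2)
        (⟪gradient Ψ x, v⟫ + L * t * ‖v‖ ^ 2) t := by
    refine ((((hasDerivAt_id t).mul_const ⟪gradient Ψ x, v⟫).const_add (Ψ x)).add
      (((hasDerivAt_pow 2 t).const_mul ((L : ℝ) / 2)).mul_const (‖v‖ ^ 2))).congr_deriv ?_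
    push_cast
    ring
  have := image_le_of_deriv_right_le_deriv_boundary
    (fun t _ => (hf t).continuousAt.continuousWithinAt) (fun t _ => (hf t).hasDerivWithinAt)
    (by simp) (fun t _ => (hB t).continuousAt.continuousWithinAt)
    (fun t _ => (hB t).hasDerivWithinAt)
    (fun t ht => by linarith [inner_gradient_add_smul_sub_le hLip x v ht.1])
    (right_mem_Icc.2 zero_le_one)
  simpa using this

theorem frankWolfe_step_sub_le {C : Set E} (hC : Bornology.IsBounded C)
    (hconvΨ : ConvexOn ℝ C Ψ) (hΨ : Differentiable ℝ Ψ) {L : NNReal}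
    (hLip : LipschitzWith L (gradient Ψ)) {x s z : E} (hx : x ∈ C) (hs : s ∈ C) (hz : z ∈ C)
    (hsmin : ⟪gradient Ψ x, s⟫ ≤ ⟪gradient Ψ x, z⟫) {γ : ℝ} (hγ : 0 ≤ γ) :
    Ψ ((1 - γ) • x + γ • s) - Ψ z ≤
      (1 - γ) * (Ψ x - Ψ z) + γ ^ 2 * (L * Metric.diam C ^ 2) / 2 := by
  have hgap : ⟪gradient Ψ x, s - x⟫ ≤ Ψ z - Ψ x :=
    calc ⟪gradient Ψ x, s - x⟫ ≤ ⟪gradient Ψ x, z - x⟫ := by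
          simpa only [inner_sub_right, sub_le_sub_iff_right] using hsmin
      _ ≤ Ψ z - Ψ x := hconvΨ.inner_gradient_sub_le hx hz (hΨ x)
  have hdiam : ‖s - x‖ ^ 2 ≤ Metric.diam C ^ 2 := by
    rw [← dist_eq_norm]
    gcongr
    exact Metric.dist_le_diam_of_mem hC hs hx
  have hdescent := apply_add_le_of_lipschitzWith_gradient hΨ hLip x (γ • (s - x))
  rw [show x + γ • (s - x) = (1 - γ) • x + γ • s by module, inner_smul_right, norm_smul,
    Real.norm_of_nonneg hγ] at hdescent
  nlinarith [mul_le_mul_of_nonneg_left hgap hγ,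
    mul_le_mul_of_nonneg_left hdiam (by positivity : (0 : ℝ) ≤ L / 2 * γ ^ 2)]

end

theorem le_two_mul_div_add_one_of_recurrence {c : ℝ} (hc : 0 ≤ c) {e : ℕ → ℝ}
    (he : ∀ k : ℕ,
      e (k + 1) ≤ (1 - 2 / ((k : ℝ) + 2)) * e k + (2 / ((k : ℝ) + 2)) ^ 2 * c / 2) :
    ∀ k : ℕ, 1 ≤ k → e k ≤ 2 * c / ((k : ℝ) + 1) := by
  intro k hk
  induction k, hk using Nat.le_induction with
  | base =>
    have h1 := he 0
    norm_num at h1 ⊢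
    linarith
  | succ k hk ih =>
    have hk' : (1 : ℝ) ≤ k := by exact_mod_cast hk
    calc e (k + 1) ≤ (1 - 2 / ((k : ℝ) + 2)) * e k + (2 / ((k : ℝ) + 2)) ^ 2 * c / 2 := he k
      _ ≤ (1 - 2 / ((k : ℝ) + 2)) * (2 * c / ((k : ℝ) + 1))
            + (2 / ((k : ℝ) + 2)) ^ 2 * c / 2 := by
          gcongr
          rw [sub_nonneg, div_le_one (by positivity)]
          linarith
      _ = 2 * c / ((k : ℝ) + 2) - 2 * c / (((k : ℝ) + 1) * ((k : ℝ) + 2) ^ 2) := by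
          field_simp
          ring
      _ ≤ 2 * c / (((k + 1 : ℕ) : ℝ) + 1) := by
          push_cast
          rw [add_assoc, one_add_one_eq_two]
          exact sub_le_self _ (by positivity)

/-- Frank–Wolfe with step sizes `γ k = 2/(k+2)` on a nonempty compact
convex set `C`, for a convex differentiable `Ψ` with `L`-Lipschitz gradient,
satisfies `Ψ (f k) − min_{f ∈ C} Ψ f ≤ 2 L diam(C)² / (k + 1)` for every `k ≥ 1`. -/
theorem fw_primal_convergence {n : ℕ}
    (C : Set (EuclideanSpace ℝ (Fin n)))
    (hne : C.Nonempty) (hcomp : IsCompact C) (hconv : Convex ℝ C)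
    (Ψ : EuclideanSpace ℝ (Fin n) → ℝ)
    (hconvΨ : ConvexOn ℝ Set.univ Ψ) (hΨ : Differentiable ℝ Ψ)
    (L : NNReal) (hLip : LipschitzWith L (fun x => gradient Ψ x))
    (f s : ℕ → EuclideanSpace ℝ (Fin n)) (hf0 : f 0 ∈ C)
    (hs : ∀ k, s k ∈ C)
    (hsmin : ∀ k, ∀ y ∈ C, ⟪gradient Ψ (f k), s k⟫ ≤ ⟪gradient Ψ (f k), y⟫)
    (hupd : ∀ k : ℕ,
        f (k + 1) = (1 - 2 / ((k : ℝ) + 2)) • f k + (2 / ((k : ℝ) + 2)) • s k) :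
    ∀ k : ℕ, 1 ≤ k →
      Ψ (f k) - sInf (Ψ '' C) ≤ 2 * L * Metric.diam C ^ 2 / ((k : ℝ) + 1) := by
  have hstep (k : ℕ) : 2 / ((k : ℝ) + 2) ∈ Icc 0 1 :=
    ⟨by positivity, (div_le_one (by positivity)).2 (by linarith [k.cast_nonneg (α := ℝ)])⟩
  have hfC := hconv.forall_mem_of_succ_eq_combination hstep hf0 hs hupd
  obtain ⟨z, hzC, hz⟩ := (hcomp.image hΨ.continuous).sInf_mem (hne.image Ψ)
  rw [← hz, mul_assoc]
  refine le_two_mul_div_add_one_of_recurrence (by positivity) (fun k => ?_)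
  rw [hupd k]
  exact frankWolfe_step_sub_le hcomp.isBounded (hconvΨ.subset (subset_univ C) hconv) hΨ hLip
    (hfC k) (hs k) hzC (hsmin k z hzC) (hstep k).1
end

section
/- Let H be a symmetric n × n real matrix, let d^{FW}, d^{k−1}, …, d^{k−N} ∈ ℝ^n be pairwise H-conjugate in the sense that (d^{k−m})ᵀ H d^{k−n} = 0 for all m ≠ n in {1, …, N}, and let γ_{k−1}, …, γ_{k−N} ∈ [0, 1). Set A_m = (d^{k−m})ᵀ H d^{FW} and B_m = (d^{k−m})ᵀ H d^{k−m}, and assume B_m ≠ 0 for all m. Define β_N = −A_N / (B_N (1 − γ_{k−N})) and, recursively for m = N−1, …, 1, β_m = −A_m / (B_m (1 − γ_{k−m})) + (γ_{k−m} / (1 − γ_{k−m})) Σ_{n=m+1}^N β_n. Assume 1 + Σ_{m=1}^N β_m ≠ 0, set α_0 = 1 / (1 + Σ_{m=1}^N β_m) and α_m = β_m α_0. Then the direction d^k = α_0 d^{FW} + Σ_{m=1}^N α_m ( Σ_{i=0}^{m−1} (1 − γ_{k−m+i}) d^{k−m+i} − Σ_{i=0}^{m−2} d^{k−m+i+1}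 ) satisfies the conjugacy conditions (d^{k−m})ᵀ H d^k = 0 for every m ∈ {1, …, N}, and moreover α_0 + Σ_{m=1}^N α_m = 1. -/
/-!
Write `d_j = d (k - j)`, `γ_j = γ (k - j)`. The `m`-th bracket in `dk` telescopes to
`(1 - γ_m) d_m - ∑_{j < m} γ_j d_j`, so by conjugacy its `H`-product with `d_{m₀}` is
`(1 - γ_{m₀}) B_{m₀}` for `m = m₀`, `-γ_{m₀} B_{m₀}` for `m > m₀` and `0` for `m < m₀`.
Hence `d_{m₀}ᵀ H dk = α₀ (A_{m₀} + β_{m₀} (1 - γ_{m₀}) B_{m₀} - γ_{m₀} B_{m₀} ∑_{m > m₀} β_m)`,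
which vanishes precisely by the recursion defining `β_{m₀}`.
-/

open Finset Matrix

theorem Finset.sum_range_sub_add_eq_sum_Icc {M : Type*} [AddCommMonoid M] (f : ℕ → M)
    {k m : ℕ} (hmk : m ≤ k) :
    ∑ i ∈ range m, f (k - m + i) = ∑ j ∈ Icc 1 m, f (k - j) :=
  sum_nbij' (fun i => m - i) (fun j => m - j)
    (fun i hi => by simp only [mem_range, mem_Icc] at hi ⊢; omega)
    (fun j hj => by simp only [mem_range, mem_Icc] at hj ⊢; omega)
    (fun i hi => by simp only [mem_range] at hi; omega)
    (fun j hj => by simp only [mem_Icc] at hj; omega)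
    (fun i hi => by simp only [mem_range] at hi; congr 1; omega)

section NFWStep

variable {R M : Type*} [CommRing R] [AddCommGroup M] [Module R M] (γ : ℕ → R) (d : ℕ → M)

/-- The `m`-th bracket of the new direction `d^k`. -/
def nfwStep (k m : ℕ) : M :=
  ∑ i ∈ range m, (1 - γ (k - m + i)) • d (k - m + i) - ∑ i ∈ range (m - 1), d (k - m + i + 1)

theorem nfwStep_eq {k m : ℕ} (hm : 1 ≤ m) (hmk : m ≤ k) :
    nfwStep γ d k m =
      (1 - γ (k - m)) • d (k - m) - ∑ j ∈ Icc 1 (m - 1), γ (k - j) • d (k - j) := by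
  obtain ⟨m, rfl⟩ : ∃ m', m = m' + 1 := ⟨m - 1, by omega⟩
  have hshift : ∀ i, k - (m + 1) + i + 1 = k - m + i := fun i => by omega
  unfold nfwStep
  simp only [add_tsub_cancel_right, hshift]
  rw [sum_range_sub_add_eq_sum_Icc (fun j => (1 - γ j) • d j) hmk,
    sum_range_sub_add_eq_sum_Icc d (by omega), sum_Icc_succ_top (by omega)]
  simp only [sub_smul, one_smul, sum_sub_distrib]
  abel

variable {N k m₀ : ℕ} {b : R} (L : M →ₗ[R] R)

theorem nfwStep_apply {m : ℕ} (hm : m ∈ Icc 1 N) (hm₀ : 1 ≤ m₀) (hNk : N ≤ k)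
    (hL : ∀ j ∈ Icc 1 N, L (d (k - j)) = if j = m₀ then b else 0) :
    L (nfwStep γ d k m) =
      (if m = m₀ then (1 - γ (k - m₀)) * b else 0) - if m₀ < m then γ (k - m₀) * b else 0 := by
  obtain ⟨hm1, hmN⟩ := mem_Icc.mp hm
  rw [nfwStep_eq γ d hm1 (hmN.trans hNk), map_sub, map_smul, map_sum, hL m hm,
    sum_congr rfl fun j hj => by
      rw [map_smul, hL j (by simp only [mem_Icc] at hj ⊢; omega), smul_eq_mul, mul_ite, mul_zero],
    sum_ite_eq', smul_eq_mul, mul_ite, mul_zero]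
  congr 1
  · split_ifs <;> simp_all
  · exact if_congr (by simp only [mem_Icc]; omega) rfl rfl

theorem map_sum_smul_nfwStep (α : ℕ → R) (hm₀ : m₀ ∈ Icc 1 N) (hNk : N ≤ k)
    (hL : ∀ j ∈ Icc 1 N, L (d (k - j)) = if j = m₀ then b else 0) :
    L (∑ m ∈ Icc 1 N, α m • nfwStep γ d k m) =
      α m₀ * ((1 - γ (k - m₀)) * b) - γ (k - m₀) * b * ∑ m ∈ Icc (m₀ + 1) N, α m := by
  have hupper : Icc (m₀ + 1) N = {m ∈ Icc 1 N | m₀ < m} := by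
    ext m
    simp only [mem_Icc, mem_filter]
    omega
  rw [map_sum, sum_congr rfl fun m hm => by
      rw [map_smul, nfwStep_apply γ d L hm (mem_Icc.mp hm₀).1 hNk hL, smul_eq_mul],
    hupper, sum_filter, mul_sum]
  simp only [mul_sub, mul_ite, mul_zero, sum_sub_distrib, sum_ite_eq', if_pos hm₀]
  congr 1
  exact sum_congr rfl fun m _ => by split_ifs <;> ring

end NFWStep

theorem nfw_beta_mul_eq {𝕜 : Type*} [Field 𝕜] {N k m : ℕ} {A B γ β : ℕ → 𝕜}
    (hβN : β N = -A N / (B N * (1 - γ (k - N))))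
    (hβ : ∀ m, 1 ≤ m → m < N →
      β m = -A m / (B m * (1 - γ (k - m)))
        + γ (k - m) / (1 - γ (k - m)) * ∑ j ∈ Icc (m + 1) N, β j)
    (hm : m ∈ Icc 1 N) (hB : B m ≠ 0) (hγ : γ (k - m) ≠ 1) :
    β m * ((1 - γ (k - m)) * B m) = -A m + γ (k - m) * B m * ∑ j ∈ Icc (m + 1) N, β j := by
  have hγ' : 1 - γ (k - m) ≠ 0 := sub_ne_zero.mpr hγ.symm
  obtain ⟨hm1, hmN⟩ := mem_Icc.mp hm
  rcases hmN.eq_or_lt with rfl | hlt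
  · rw [hβN, Icc_eq_empty (by omega), sum_empty]
    field_simp
    ring
  · rw [hβ m hm1 hlt]
    field_simp

theorem nfw_coefficients_give_conjugate_direction_general {n N k : ℕ}
    (hNk : N ≤ k)
    (H : Matrix (Fin n) (Fin n) ℝ)
    (dFW : Fin n → ℝ) (d : ℕ → Fin n → ℝ) (γ : ℕ → ℝ)
    (hγ : ∀ m ∈ Finset.Icc 1 N, γ (k - m) ∈ Set.Ico (0:ℝ) 1)
    (hconj : ∀ m ∈ Finset.Icc 1 N, ∀ m' ∈ Finset.Icc 1 N, m ≠ m' →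
      d (k - m) ⬝ᵥ H.mulVec (d (k - m')) = 0)
    (A B : ℕ → ℝ)
    (hA : ∀ m ∈ Finset.Icc 1 N, A m = d (k - m) ⬝ᵥ H.mulVec dFW)
    (hB : ∀ m ∈ Finset.Icc 1 N, B m = d (k - m) ⬝ᵥ H.mulVec (d (k - m)))
    (hBne : ∀ m ∈ Finset.Icc 1 N, B m ≠ 0)
    (β : ℕ → ℝ)
    (hβN : β N = -A N / (B N * (1 - γ (k - N))))
    (hβ : ∀ m, 1 ≤ m → m < N →
      β m = -A m / (B m * (1 - γ (k - m)))
        + γ (k - m) / (1 - γ (k - m)) * ∑ j ∈ Finset.Icc (m + 1) N, β j)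
    (hden : 1 + ∑ m ∈ Finset.Icc 1 N, β m ≠ 0)
    (α : ℕ → ℝ)
    (hα0 : α 0 = 1 / (1 + ∑ m ∈ Finset.Icc 1 N, β m))
    (hαm : ∀ m ∈ Finset.Icc 1 N, α m = β m * α 0)
    (dk : Fin n → ℝ)
    (hdk : dk = α 0 • dFW + ∑ m ∈ Finset.Icc 1 N, α m •
        (∑ i ∈ Finset.range m, (1 - γ (k - m + i)) • d (k - m + i)
          - ∑ i ∈ Finset.range (m - 1), d (k - m + i + 1))) :
    (∀ m ∈ Finset.Icc 1 N, d (k - m) ⬝ᵥ H.mulVec dk = 0) ∧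
      α 0 + ∑ m ∈ Finset.Icc 1 N, α m = 1 := by
  refine ⟨fun m₀ hm₀ => ?_, ?_⟩
  · set L : (Fin n → ℝ) →ₗ[ℝ] ℝ := toLinearMap₂' ℝ H (d (k - m₀))
    have hL : ∀ j ∈ Icc 1 N, L (d (k - j)) = if j = m₀ then B m₀ else 0 := by
      intro j hj
      rw [toLinearMap₂'_apply']
      split_ifs with h
      · rw [h, hB m₀ hm₀]
      · exact hconj m₀ hm₀ j hj (Ne.symm h)
    have hαupper : ∑ m ∈ Icc (m₀ + 1) N, α m = (∑ m ∈ Icc (m₀ + 1) N, β m) * α 0 :=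
      (sum_congr rfl fun m hm => hαm m (by simp only [mem_Icc] at hm ⊢; omega)).trans
        (sum_mul _ _ _).symm
    have hdk' : dk = α 0 • dFW + ∑ m ∈ Icc 1 N, α m • nfwStep γ d k m := hdk
    rw [← toLinearMap₂'_apply', hdk', map_add, map_smul, toLinearMap₂'_apply', ← hA m₀ hm₀,
      map_sum_smul_nfwStep γ d L α hm₀ hNk hL, hαupper, hαm m₀ hm₀, smul_eq_mul]
    linear_combination α 0 * nfw_beta_mul_eq hβN hβ hm₀ (hBne m₀ hm₀) (hγ m₀ hm₀).2.ne
  · rw [sum_congr rfl hαm, ← sum_mul, hα0]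
    field_simp

/-- Correctness of the N-conjugate Frank–Wolfe coefficients.
With `H` symmetric, previous directions `d (k−1), …, d (k−N)` pairwise
`H`-conjugate, step sizes `γ (k−m) ∈ [0,1)`, `A m = d(k−m)ᵀ H dFW`,
`B m = d(k−m)ᵀ H d(k−m) ≠ 0`, the recursively defined `β` and the convex-combination
coefficients `α m = β m * α 0`, `α 0 = 1/(1 + ∑ β)`, the resulting direction `dk`
is `H`-conjugate to every previous direction, and the coefficients sum to one. -/
theorem nfw_coefficients_give_conjugate_direction {n N k : ℕ}
    (hN : 1 ≤ N) (hNk : N ≤ k)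
    (H : Matrix (Fin n) (Fin n) ℝ) (hH : H.IsSymm)
    (dFW : Fin n → ℝ) (d : ℕ → Fin n → ℝ) (γ : ℕ → ℝ)
    (hγ : ∀ m ∈ Finset.Icc 1 N, γ (k - m) ∈ Set.Ico (0:ℝ) 1)
    (hconj : ∀ m ∈ Finset.Icc 1 N, ∀ m' ∈ Finset.Icc 1 N, m ≠ m' →
      d (k - m) ⬝ᵥ H.mulVec (d (k - m')) = 0)
    (A B : ℕ → ℝ)
    (hA : ∀ m ∈ Finset.Icc 1 N, A m = d (k - m) ⬝ᵥ H.mulVec dFW)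
    (hB : ∀ m ∈ Finset.Icc 1 N, B m = d (k - m) ⬝ᵥ H.mulVec (d (k - m)))
    (hBne : ∀ m ∈ Finset.Icc 1 N, B m ≠ 0)
    (β : ℕ → ℝ)
    (hβN : β N = -A N / (B N * (1 - γ (k - N))))
    (hβ : ∀ m, 1 ≤ m → m < N →
      β m = -A m / (B m * (1 - γ (k - m)))
        + γ (k - m) / (1 - γ (k - m)) * ∑ j ∈ Finset.Icc (m + 1) N, β j)
    (hden : 1 + ∑ m ∈ Finset.Icc 1 N, β m ≠ 0)
    (α : ℕ → ℝ)
    (hα0 : α 0 = 1 / (1 + ∑ m ∈ Finset.Icc 1 N, β m))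
    (hαm : ∀ m ∈ Finset.Icc 1 N, α m = β m * α 0)
    (dk : Fin n → ℝ)
    (hdk : dk = α 0 • dFW + ∑ m ∈ Finset.Icc 1 N, α m •
        (∑ i ∈ Finset.range m, (1 - γ (k - m + i)) • d (k - m + i)
          - ∑ i ∈ Finset.range (m - 1), d (k - m + i + 1))) :
    (∀ m ∈ Finset.Icc 1 N, d (k - m) ⬝ᵥ H.mulVec dk = 0) ∧
      α 0 + ∑ m ∈ Finset.Icc 1 N, α m = 1 :=
  nfw_coefficients_give_conjugate_direction_general hNk H dFW d γ hγ hconj A B hA hB hBne β hβN hβ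
    hden α hα0 hαm dk hdk
end
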